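/- For all x > 0, the integral ∫₀^∞ e^{-(x+y)²/2} y² dy is at least [2 - e^{-(x+1/2)}(x² + 3x + 13/4)] / (x + 1/2)³ · e^{-x²/2}. -/

import Mathlib

open MeasureTheory Real

/-!
On `[0, 1]` we have `(x + y)² ≤ x² + (2x + 1) y`, so the integrand dominates
`e^{-x²/2} e^{-(x + 1/2) y} y²` there; the latter integrates in closed form, and `c = x + 1/2`
turns `c² + 2c + 2` into `x² + 3x + 13/4`.
-/

lemma hasDerivAt_exp_neg_mul_mul_sq_antideriv {c : ℝ} (hc : c ≠ 0) (y : ℝ) :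
    HasDerivAt (fun y => -exp (-c * y) * (y ^ 2 / c + 2 * y / c ^ 2 + 2 / c ^ 3))
      (exp (-c * y) * y ^ 2) y := by
  have hexp : HasDerivAt (fun y => exp (-c * y)) (exp (-c * y) * -c) y := by
    simpa using ((hasDerivAt_id y).const_mul (-c)).exp
  have hpoly : HasDerivAt (fun y => y ^ 2 / c + 2 * y / c ^ 2 + 2 / c ^ 3)
      (2 * y / c + 2 / c ^ 2) y := by
    simpa using (((hasDerivAt_pow 2 y).div_const c).add
      (((hasDerivAt_id y).const_mul 2).div_const (c ^ 2))).add_const (2 / c ^ 3)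
  refine (hexp.neg.mul hpoly).congr_deriv ?_
  simp only [Pi.neg_apply]
  field_simp
  ring

lemma integral_exp_neg_mul_mul_sq {c : ℝ} (hc : c ≠ 0) (b : ℝ) :
    ∫ y in (0 : ℝ)..b, exp (-c * y) * y ^ 2
      = (2 - exp (-c * b) * (c ^ 2 * b ^ 2 + 2 * c * b + 2)) / c ^ 3 := by
  rw [intervalIntegral.integral_eq_sub_of_hasDerivAt
    (fun y _ => hasDerivAt_exp_neg_mul_mul_sq_antideriv hc y)
    ((by fun_prop : Continuous fun y => exp (-c * y) * y ^ 2).intervalIntegrable 0 b)]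
  simp only [mul_zero, exp_zero]
  field_simp
  ring

lemma integrableOn_exp_neg_add_sq_mul_sq {x : ℝ} (hx : 0 ≤ x) :
    IntegrableOn (fun y => exp (-(x + y) ^ 2 / 2) * y ^ 2) (Set.Ioi 0) := by
  have hgauss : IntegrableOn (fun y : ℝ => y ^ 2 * exp (-(1 / 2) * y ^ 2)) (Set.Ioi 0) := by
    simpa only [rpow_two] using
      integrableOn_rpow_mul_exp_neg_mul_sq (b := 1 / 2) (by norm_num) (by norm_num : (-1 : ℝ) < 2)
  refine hgauss.mono' (by fun_prop : Continuous _).aestronglyMeasurable ?_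
  filter_upwards [ae_restrict_mem measurableSet_Ioi] with y (hy : 0 < y)
  rw [norm_of_nonneg (by positivity), mul_comm]
  gcongr
  nlinarith [mul_nonneg hx hy.le]

lemma exp_neg_sq_div_two_mul_exp_le {x y : ℝ} (hy₀ : 0 ≤ y) (hy₁ : y ≤ 1) :
    exp (-x ^ 2 / 2) * exp (-(x + 1 / 2) * y) ≤ exp (-(x + y) ^ 2 / 2) := by
  rw [← exp_add]
  gcongr
  nlinarith [mul_nonneg hy₀ (sub_nonneg.mpr hy₁)]

theorem stmt_5 (x : ℝ) (hx : 0 < x) :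
    (2 - Real.exp (-(x + 1 / 2)) * (x ^ 2 + 3 * x + 13 / 4)) / (x + 1 / 2) ^ 3 *
        Real.exp (-x ^ 2 / 2) ≤
      ∫ y in Set.Ioi (0 : ℝ), Real.exp (-(x + y) ^ 2 / 2) * y ^ 2 := by
  have hc : x + 1 / 2 ≠ 0 := by positivity
  have hint := integrableOn_exp_neg_add_sq_mul_sq hx.le
  calc (2 - exp (-(x + 1 / 2)) * (x ^ 2 + 3 * x + 13 / 4)) / (x + 1 / 2) ^ 3 * exp (-x ^ 2 / 2)
      = ∫ y in (0 : ℝ)..1, exp (-x ^ 2 / 2) * (exp (-(x + 1 / 2) * y) * y ^ 2) := by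
        rw [intervalIntegral.integral_const_mul, integral_exp_neg_mul_mul_sq hc]
        ring_nf
    _ ≤ ∫ y in (0 : ℝ)..1, exp (-(x + y) ^ 2 / 2) * y ^ 2 := by
        have hcont : Continuous fun y => exp (-x ^ 2 / 2) * (exp (-(x + 1 / 2) * y) * y ^ 2) := by
          fun_prop
        refine intervalIntegral.integral_mono_on zero_le_one (hcont.intervalIntegrable 0 1)
          ((intervalIntegrable_iff_integrableOn_Ioc_of_le zero_le_one).2
            (hint.mono_set Set.Ioc_subset_Ioi_self)) fun y hy => ?_
        rw [← mul_assoc]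
        gcongr
        exact exp_neg_sq_div_two_mul_exp_le hy.1 hy.2
    _ ≤ ∫ y in Set.Ioi (0 : ℝ), exp (-(x + y) ^ 2 / 2) * y ^ 2 := by
        rw [intervalIntegral.integral_of_le zero_le_one]
        exact setIntegral_mono_set hint (.of_forall fun y => by positivity)
          (.of_forall Set.Ioc_subset_Ioi_self)
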